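/- arXiv:2507.17006 — 4 statements merged into one kernel-verified Lean document; each statement's English description precedes it below -/
import Mathlib

section
/- Let ι be a finite index set and, for each i ∈ ι, let M_i be a positive semidefinite (m+n)×(m+n) complex matrix, written in block form M_i = [[A_i, B_i], [B_iᴴ, C_i]] with A_i the m×m top-left block. Let M := Σ_{i ∈ ι} M_i with top-left block A := Σ_{i ∈ ι} A_i. If rank(M) = rank(A) (i.e., M is flat over its top-left block), then rank(M_i) = rank(A_i) for every i ∈ ι (i.e., each summand M_i is flat over its top-left block). -/
/-!
For a PSD block matrix `M = [[A, B], [Bᴴ, C]]`, a vector `(u, 0)` lies in `ker M` exactly when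
`u ∈ ker A` (its quadratic form is `uᴴ A u`). Rank–nullity then gives
`rank M + dim π(ker M) = rank A + n`, where `π` projects onto the last `n` coordinates, so `M` is
flat over `A` iff every `v` extends to a kernel vector `(u, v)` of `M`. The kernel of a sum of
PSD matrices lies in the kernel of each summand, since the nonnegative quadratic forms of the
summands add up to zero there; hence extensions for the sum are extensions for every summand.
-/

open LinearMap Module
open scoped ComplexOrder

namespace Matrix

theorem rank_add_finrank_ker {K m n : Type*} [Field K] [Fintype n] (M : Matrix m n K) :
    M.rank + finrank K (ker M.mulVecLin) = Fintype.card n := by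
  rw [rank, finrank_range_add_finrank_ker, finrank_fintype_fun_eq_card]

theorem fromBlocks_sum {α ι m n : Type*} [AddCommMonoid α] (s : Finset ι) (A : ι → Matrix m m α)
    (B : ι → Matrix m n α) (D : ι → Matrix n m α) (C : ι → Matrix n n α) :
    ∑ i ∈ s, fromBlocks (A i) (B i) (D i) (C i) =
      fromBlocks (∑ i ∈ s, A i) (∑ i ∈ s, B i) (∑ i ∈ s, D i) (∑ i ∈ s, C i) := by
  ext (_ | _) (_ | _) <;> simp [sum_apply]

variable {𝕜 m n : Type*} [RCLike 𝕜] [Fintype m] [Fintype n]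

theorem ker_mulVecLin_sum_le {ι : Type*} {s : Finset ι} {M : ι → Matrix n n 𝕜}
    (hM : ∀ i ∈ s, (M i).PosSemidef) {i : ι} (hi : i ∈ s) :
    ker (∑ j ∈ s, M j).mulVecLin ≤ ker (M i).mulVecLin := by
  intro x hx
  rw [mem_ker, mulVecLin_apply] at hx ⊢
  have hsum : ∑ j ∈ s, star x ⬝ᵥ M j *ᵥ x = 0 := by
    rw [← dotProduct_sum, ← sum_mulVec, hx, dotProduct_zero]
  rw [← (hM i hi).dotProduct_mulVec_zero_iff]
  exact (Finset.sum_eq_zero_iff_of_nonneg fun j hj ↦ (hM j hj).dotProduct_mulVec_nonneg x).mp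
    hsum i hi

variable {A : Matrix m m 𝕜} {B : Matrix m n 𝕜} {D : Matrix n m 𝕜} {C : Matrix n n 𝕜}

theorem PosSemidef.fromBlocks_mulVec_sumElim_zero_eq_zero_iff
    (h : (fromBlocks A B D C).PosSemidef) {u : m → 𝕜} :
    fromBlocks A B D C *ᵥ Sum.elim u 0 = 0 ↔ A *ᵥ u = 0 := by
  refine ⟨fun hu ↦ ?_, fun hu ↦ ?_⟩
  · simpa [fromBlocks_mulVec] using congr_arg (· ∘ Sum.inl) hu
  · rw [← h.dotProduct_mulVec_zero_iff, fromBlocks_mulVec, Function.star_sumElim,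
      sumElim_dotProduct_sumElim]
    simp [hu]

theorem PosSemidef.finrank_ker_fromBlocks (h : (fromBlocks A B D C).PosSemidef) :
    finrank 𝕜 (ker (fromBlocks A B D C).mulVecLin) = finrank 𝕜 (ker A.mulVecLin) +
      finrank 𝕜 ((ker (fromBlocks A B D C).mulVecLin).map (funLeft 𝕜 𝕜 Sum.inr)) := by
  set K := ker (fromBlocks A B D C).mulVecLin
  set π := (funLeft 𝕜 𝕜 Sum.inr : (m ⊕ n → 𝕜) →ₗ[𝕜] n → 𝕜)
  have head_zero (x : ker (π ∘ₗ K.subtype)) :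
      Sum.elim ((x : m ⊕ n → 𝕜) ∘ Sum.inl) 0 = (x : m ⊕ n → 𝕜) := by
    rw [← show (x : m ⊕ n → 𝕜) ∘ Sum.inr = 0 from x.2, Sum.elim_comp_inl_inr]
  let e : ker (π ∘ₗ K.subtype) ≃ₗ[𝕜] ker A.mulVecLin :=
    { toFun x := ⟨(x : m ⊕ n → 𝕜) ∘ Sum.inl, by
        rw [mem_ker, mulVecLin_apply, ← h.fromBlocks_mulVec_sumElim_zero_eq_zero_iff, head_zero]
        exact x.1.2⟩
      map_add' _ _ := rfl
      map_smul' _ _ := rfl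
      invFun u := ⟨⟨Sum.elim u 0, h.fromBlocks_mulVec_sumElim_zero_eq_zero_iff.mpr u.2⟩, rfl⟩
      left_inv x := by ext1; ext1; exact head_zero x
      right_inv _ := rfl }
  have rank_nullity := (π ∘ₗ K.subtype).finrank_range_add_finrank_ker
  rw [range_comp, Submodule.range_subtype, e.finrank_eq] at rank_nullity
  omega

theorem PosSemidef.rank_fromBlocks_eq_rank_iff (h : (fromBlocks A B D C).PosSemidef) :
    (fromBlocks A B D C).rank = A.rank ↔
      (ker (fromBlocks A B D C).mulVecLin).map (funLeft 𝕜 𝕜 Sum.inr) = ⊤ := by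
  have hM := (fromBlocks A B D C).rank_add_finrank_ker
  have hA := A.rank_add_finrank_ker
  have hK := h.finrank_ker_fromBlocks
  have hle :=
    Submodule.finrank_le ((ker (fromBlocks A B D C).mulVecLin).map (funLeft 𝕜 𝕜 Sum.inr))
  rw [Fintype.card_sum] at hM
  rw [finrank_fintype_fun_eq_card] at hle
  rw [Submodule.eq_top_iff_finrank_eq, finrank_fintype_fun_eq_card]
  omega

end Matrix

open Matrix

/-- If a finite sum `M = Σ_i M_i` of PSD block matrices
`M_i = [[A_i, B_i], [B_iᴴ, C_i]]` is flat over its top-left block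
(`rank M = rank (Σ_i A_i)`), then each summand is flat over its top-left block. -/
theorem flat_sum_implies_flat_summands {m n : ℕ} {ι : Type*} [Fintype ι]
    (A : ι → Matrix (Fin m) (Fin m) ℂ) (B : ι → Matrix (Fin m) (Fin n) ℂ)
    (C : ι → Matrix (Fin n) (Fin n) ℂ)
    (hpsd : ∀ i, (Matrix.fromBlocks (A i) (B i) (B i)ᴴ (C i)).PosSemidef)
    (hflat : (∑ i, Matrix.fromBlocks (A i) (B i) (B i)ᴴ (C i)).rank = (∑ i, A i).rank) :
    ∀ i, (Matrix.fromBlocks (A i) (B i) (B i)ᴴ (C i)).rank = (A i).rank := by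
  intro i
  have hsum_psd := posSemidef_sum Finset.univ fun j _ ↦ hpsd j
  rw [fromBlocks_sum] at hflat hsum_psd
  have hsum_extends := hsum_psd.rank_fromBlocks_eq_rank_iff.mp hflat
  rw [← fromBlocks_sum] at hsum_extends
  rw [(hpsd i).rank_fromBlocks_eq_rank_iff, eq_top_iff, ← hsum_extends]
  exact Submodule.map_mono (ker_mulVecLin_sum_le (fun j _ ↦ hpsd j) (Finset.mem_univ i))
end

section
/- Let M = [[A, B], [Bᴴ, C]] be a positive semidefinite (m+n)×(m+n) complex matrix with m×m top-left block A, and suppose rank(M) = rank(A). Then there exists an m×n complex matrix Z such that B = A·Z and C = Zᴴ·A·Z; that is, every flat PSD block matrix is exactly the flat extension of its top-left block. -/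
open Matrix
open scoped ComplexOrder

/-!
Factor the PSD matrix as a Gram matrix `M = Nᴴ N` and split `N = [X | Y]` into column blocks,
so that `A = Xᴴ X`, `B = Xᴴ Y`, `C = Yᴴ Y`. Since `rank (Nᴴ N) = rank N` and
`rank (Xᴴ X) = rank X`, flatness says that adjoining the columns of `Y` to `X` does not increase
the rank, so `Y = X Z` for some `Z`; then `B = Xᴴ X Z = A Z` and `C = Zᴴ Xᴴ X Z = Zᴴ A Z`.
-/

namespace Matrix

theorem PosSemidef.exists_eq_conjTranspose_mul_self {𝕜 n : Type*} [RCLike 𝕜] [Fintype n]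
    {M : Matrix n n 𝕜} (hM : M.PosSemidef) : ∃ N : Matrix n n 𝕜, M = Nᴴ * N := by
  classical
  open scoped MatrixOrder in
  exact CStarAlgebra.nonneg_iff_eq_star_mul_self.mp hM.nonneg

theorem conjTranspose_fromCols_mul_fromCols {R l m n : Type*} [Semiring R] [StarRing R]
    [Fintype l] (X : Matrix l m R) (Y : Matrix l n R) :
    (fromCols X Y)ᴴ * fromCols X Y = fromBlocks (Xᴴ * X) (Xᴴ * Y) (Yᴴ * X) (Yᴴ * Y) := by
  rw [conjTranspose_fromCols_eq_fromRows_conjTranspose, fromRows_mul_fromCols]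

theorem exists_eq_mul_of_range_mulVecLin_le {R l m n : Type*} [CommSemiring R] [Fintype m]
    [Fintype n] {X : Matrix l m R} {Y : Matrix l n R}
    (h : LinearMap.range Y.mulVecLin ≤ LinearMap.range X.mulVecLin) :
    ∃ W : Matrix m n R, Y = X * W := by
  classical
  obtain ⟨H, hH⟩ := Module.projective_lifting_property X.mulVecLin.rangeRestrict
    (Y.mulVecLin.codRestrict _ fun v => h ⟨v, rfl⟩) X.mulVecLin.surjective_rangeRestrict
  refine ⟨LinearMap.toMatrix' H, toLin'.injective ?_⟩
  rw [toLin'_mul, toLin'_toMatrix']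
  exact LinearMap.ext fun v => congrArg Subtype.val (LinearMap.congr_fun hH v).symm

theorem range_mulVecLin_le_of_rank_fromCols_eq {K l m n : Type*} [Field K] [Fintype m]
    [Fintype n] {X : Matrix l m K} {Y : Matrix l n K}
    (h : (fromCols X Y).rank = X.rank) :
    LinearMap.range Y.mulVecLin ≤ LinearMap.range X.mulVecLin := by
  have hX : LinearMap.range X.mulVecLin ≤ LinearMap.range (fromCols X Y).mulVecLin := by
    rintro _ ⟨v, rfl⟩
    exact ⟨Sum.elim v 0, by simp⟩
  rw [Submodule.eq_of_le_of_finrank_eq hX h.symm]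
  rintro _ ⟨v, rfl⟩
  exact ⟨Sum.elim 0 v, by simp⟩

theorem exists_eq_mul_of_rank_fromCols_eq {K l m n : Type*} [Field K] [Fintype m]
    [Fintype n] {X : Matrix l m K} {Y : Matrix l n K}
    (h : (fromCols X Y).rank = X.rank) : ∃ W : Matrix m n K, Y = X * W :=
  exists_eq_mul_of_range_mulVecLin_le (range_mulVecLin_le_of_rank_fromCols_eq h)

end Matrix

/-- A PSD block matrix `M = [[A, B], [Bᴴ, C]]` with `rank M = rank A`
is exactly the flat extension of its top-left block: there is `Z` with `B = A·Z` and
`C = Zᴴ·A·Z`. -/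
theorem flat_psd_block_is_flat_extension {m n : ℕ}
    (A : Matrix (Fin m) (Fin m) ℂ) (B : Matrix (Fin m) (Fin n) ℂ)
    (C : Matrix (Fin n) (Fin n) ℂ)
    (hpsd : (Matrix.fromBlocks A B Bᴴ C).PosSemidef)
    (hflat : (Matrix.fromBlocks A B Bᴴ C).rank = A.rank) :
    ∃ Z : Matrix (Fin m) (Fin n) ℂ, B = A * Z ∧ C = Zᴴ * A * Z := by
  obtain ⟨N, hN⟩ := hpsd.exists_eq_conjTranspose_mul_self
  obtain ⟨X, Y, rfl⟩ : ∃ X Y, N = fromCols X Y := ⟨_, _, (fromCols_toCols N).symm⟩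
  rw [hN, rank_conjTranspose_mul_self] at hflat
  rw [conjTranspose_fromCols_mul_fromCols] at hN
  obtain ⟨rfl, rfl, -, rfl⟩ := fromBlocks_inj.mp hN
  rw [rank_conjTranspose_mul_self] at hflat
  obtain ⟨Z, rfl⟩ := exists_eq_mul_of_rank_fromCols_eq hflat
  exact ⟨Z, by rw [Matrix.mul_assoc], by simp only [conjTranspose_mul, Matrix.mul_assoc]⟩
end

section
/- Let A be a unital C*-algebra, and let S denote the set of states on A, i.e., continuous linear functionals φ : A → ℂ with φ(1) = 1, ‖φ‖ ≤ 1, and φ(a* a) real and nonnegative for every a ∈ A, equipped with the weak-* topology. Let β ∈ A, set ω* := sup_{φ ∈ S} Re φ(β), and suppose there is a state ρ* ∈ S with Re ρ*(β) = ω* that is the unique maximizer: every φ ∈ S with Re φ(β) = ω* equals ρ*. Then exact self-testing implies robust self-testing: for every P ∈ A and every ε > 0 there exists δ > 0 such that for all φ ∈ S, if Re φ(β) ≥ ω* − δ then |φ(P) − ρ*(P)| ≤ ε. -/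
open scoped ComplexOrder

/-- A state on a unital C*-algebra `A`: a continuous linear functional `φ : A → ℂ` with
`φ 1 = 1`, `‖φ‖ ≤ 1`, and `φ (a* a)` real and nonnegative for every `a`. -/
def IsState {A : Type*} [NormedRing A] [StarRing A] [NormedAlgebra ℂ A]
    (φ : A →L[ℂ] ℂ) : Prop :=
  φ 1 = 1 ∧ ‖φ‖ ≤ 1 ∧ ∀ a : A, 0 ≤ φ (star a * a)

lemma isClosed_nonneg_complex : IsClosed {z : ℂ | 0 ≤ z} := by
  have : {z : ℂ | 0 ≤ z} = Complex.re ⁻¹' Set.Ici 0 ∩ Complex.im ⁻¹' {0} := by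
    ext z
    simp [Complex.le_def, Set.mem_setOf_eq, eq_comm]
  rw [this]
  exact (isClosed_Ici.preimage Complex.continuous_re).inter
    (isClosed_singleton.preimage Complex.continuous_im)

/-- If a unique state `ρ*` attains the optimal value
`ω* = sup_{states φ} Re φ(β)` (exact commuting-operator self-testing), then self-testing is
automatically robust: near-optimal states are pointwise close to `ρ*`. -/
theorem exact_selftest_implies_robust {A : Type*} [NormedRing A] [StarRing A] [CStarRing A]
    [NormedAlgebra ℂ A] [CompleteSpace A]
    (β : A) (ω : ℝ)
    (hω : ω = sSup ((fun φ : A →L[ℂ] ℂ => (φ β).re) '' {φ | IsState φ}))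
    (ρ : A →L[ℂ] ℂ) (hρ : IsState ρ) (hρopt : (ρ β).re = ω)
    (huniq : ∀ φ : A →L[ℂ] ℂ, IsState φ → (φ β).re = ω → φ = ρ) :
    ∀ (P : A) (ε : ℝ), 0 < ε → ∃ δ : ℝ, 0 < δ ∧
      ∀ φ : A →L[ℂ] ℂ, IsState φ → ω - δ ≤ (φ β).re → ‖φ P - ρ P‖ ≤ ε := by
  intro P ε hε
  by_contra hcon
  push_neg at hcon
  -- for each n, a "bad" near-optimal state
  have hbad : ∀ n : ℕ, ∃ φ : A →L[ℂ] ℂ, IsState φ ∧ ω - 1/(n+1) ≤ (φ β).re ∧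
      ε < ‖φ P - ρ P‖ := by
    intro n
    obtain ⟨φ, hφs, hφβ, hφP⟩ := hcon (1/(n+1)) (by positivity)
    exact ⟨φ, hφs, hφβ, hφP⟩
  -- every state value is bounded above by ω
  have hub : ∀ φ : A →L[ℂ] ℂ, IsState φ → (φ β).re ≤ ω := by
    intro φ hφ
    rw [hω]
    refine le_csSup ⟨‖β‖, ?_⟩ ⟨φ, hφ, rfl⟩
    rintro x ⟨ψ, hψ, rfl⟩
    calc (ψ β).re ≤ ‖ψ β‖ := Complex.re_le_norm _
      _ ≤ ‖ψ‖ * ‖β‖ := ψ.le_opNorm β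
      _ ≤ 1 * ‖β‖ := by
          exact mul_le_mul_of_nonneg_right hψ.2.1 (norm_nonneg β)
      _ = ‖β‖ := one_mul _
  -- the family of compact sets in the weak-* dual
  set t : ℕ → Set (WeakDual ℂ A) := fun n =>
    {φ : WeakDual ℂ A | IsState (WeakDual.toStrongDual φ) ∧ ω - 1/(n+1) ≤ (φ β).re ∧
      ε ≤ ‖φ P - ρ P‖} with ht
  have hball : IsCompact (WeakDual.toStrongDual ⁻¹' Metric.closedBall 0 1 :
      Set (WeakDual ℂ A)) := WeakDual.isCompact_closedBall (𝕜 := ℂ) (E := A) 0 1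
  have htclosed : ∀ n, IsClosed (t n) := by
    intro n
    have h1 : IsClosed {φ : WeakDual ℂ A | φ 1 = 1} :=
      isClosed_singleton.preimage (WeakDual.eval_continuous (1 : A))
    have h2 : IsClosed {φ : WeakDual ℂ A | ‖WeakDual.toStrongDual φ‖ ≤ 1} := by
      have : {φ : WeakDual ℂ A | ‖WeakDual.toStrongDual φ‖ ≤ 1} =
          WeakDual.toStrongDual ⁻¹' Metric.closedBall 0 1 := by
        ext φ; simp [Metric.mem_closedBall, dist_zero_right]
      rw [this]
      exact hball.isClosed
    have h3 : ∀ a : A, IsClosed {φ : WeakDual ℂ A | 0 ≤ φ (star a * a)} := fun a =>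
      isClosed_nonneg_complex.preimage (WeakDual.eval_continuous (star a * a))
    have h4 : IsClosed {φ : WeakDual ℂ A | ω - 1/(n+1) ≤ (φ β).re} :=
      (isClosed_Ici.preimage Complex.continuous_re).preimage (WeakDual.eval_continuous β)
    have h5 : IsClosed {φ : WeakDual ℂ A | ε ≤ ‖φ P - ρ P‖} := by
      have : Continuous fun φ : WeakDual ℂ A => ‖φ P - ρ P‖ :=
        ((WeakDual.eval_continuous P).sub continuous_const).norm
      exact isClosed_le continuous_const this
    have : t n = ({φ : WeakDual ℂ A | φ 1 = 1} ∩
        ({φ : WeakDual ℂ A | ‖WeakDual.toStrongDual φ‖ ≤ 1} ∩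
        (⋂ a : A, {φ : WeakDual ℂ A | 0 ≤ φ (star a * a)}))) ∩
        ({φ : WeakDual ℂ A | ω - 1/(n+1) ≤ (φ β).re} ∩
         {φ : WeakDual ℂ A | ε ≤ ‖φ P - ρ P‖}) := by
      ext φ
      simp only [ht, Set.mem_setOf_eq, Set.mem_inter_iff, Set.mem_iInter, IsState]
      tauto
    rw [this]
    exact ((h1.inter (h2.inter (isClosed_iInter h3))).inter (h4.inter h5))
  have htcompact : ∀ n, IsCompact (t n) := by
    intro n
    refine hball.of_isClosed_subset (htclosed n) ?_
    intro φ hφ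
    simp only [Set.mem_preimage, Metric.mem_closedBall, dist_zero_right]
    exact hφ.1.2.1
  have htnonempty : ∀ n, (t n).Nonempty := by
    intro n
    obtain ⟨φ, hφs, hφβ, hφP⟩ := hbad n
    exact ⟨WeakDual.toStrongDual.symm φ, hφs, hφβ, le_of_lt hφP⟩
  have htdir : Directed (· ⊇ ·) t := by
    intro m n
    refine ⟨max m n, ?_, ?_⟩ <;>
    · intro φ hφ
      refine ⟨hφ.1, le_trans (by
        have : (1 : ℝ)/(max m n + 1) ≤ 1/(m+1) ∧ (1 : ℝ)/(max m n + 1) ≤ 1/(n+1) := by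
          constructor <;>
          · apply one_div_le_one_div_of_le (by positivity)
            push_cast
            simp [Nat.le_max_left, Nat.le_max_right]
        linarith [this.1, this.2]) hφ.2.1, hφ.2.2⟩
  obtain ⟨φ, hφ⟩ := IsCompact.nonempty_iInter_of_directed_nonempty_isCompact_isClosed
    t htdir htnonempty htcompact htclosed
  simp only [Set.mem_iInter] at hφ
  have hφs : IsState (WeakDual.toStrongDual φ) := (hφ 0).1
  -- Re φ β = ω
  have hge : ω ≤ (φ β).re := by
    by_contra h
    push_neg at h
    obtain ⟨n, hn⟩ := exists_nat_one_div_lt (sub_pos.mpr h)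
    have := (hφ n).2.1
    linarith
  have heq : ((WeakDual.toStrongDual φ) β).re = ω :=
    le_antisymm (hub _ hφs) hge
  have :  WeakDual.toStrongDual φ = ρ := huniq _ hφs heq
  have hzero : φ P - ρ P = 0 := by
    have : (WeakDual.toStrongDual φ) P = ρ P := by rw [this]
    simpa [sub_eq_zero] using this
  have := (hφ 0).2.2
  rw [hzero] at this
  simp at this
  linarith
end

section
/- Let R be a unital ℂ-algebra equipped with a star-ring structure compatible with the ℂ-algebra structure (a complex *-algebra), let B ⊆ R be a *-subalgebra, let m be a natural number, and let p : Fin m → R be a family of self-adjoint idempotents (star(p_a) = p_a and p_a · p_a = p_a) each of which commutes with every element of B. Let L : R → ℂ be a ℂ-linear map such that: (1) for every a and every f ∈ B, L(p_a · (f* · f)) is a nonnegative real number; and (2) for every h ∈ B, L(h) = Σ_{a} L(p_a · h). Then for every a and all f, g ∈ B, the value L((p_a · f + g)* · (p_a · f + g)) is a nonnegative real number; i.e., L is nonnegative on the sparse sums-of-squares generated by elements of the form p_a · f + g with f, g ∈ B. -/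
open scoped ComplexOrder

/-- Let `R` be a complex *-algebra, `B` a *-subalgebra, and
`p : Fin m → R` self-adjoint idempotents commuting with every element of `B`. If a
ℂ-linear functional `L` satisfies `0 ≤ L (p_a · (f* · f))` for all `a` and `f ∈ B`, and
`L h = Σ_a L (p_a · h)` for all `h ∈ B`, then `L` is nonnegative on the sparse sums of
squares: `0 ≤ L ((p_a·f + g)* · (p_a·f + g))` for all `a` and `f, g ∈ B`. -/
theorem sparse_sos_positivity {R : Type*} [Ring R] [Algebra ℂ R] [StarRing R] [StarModule ℂ R]
    (B : StarSubalgebra ℂ R) {m : ℕ} (p : Fin m → R)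
    (hsa : ∀ a, star (p a) = p a)
    (hidem : ∀ a, p a * p a = p a)
    (hcomm : ∀ a, ∀ b ∈ B, Commute (p a) b)
    (L : R →ₗ[ℂ] ℂ)
    (h1 : ∀ a, ∀ f ∈ B, 0 ≤ L (p a * (star f * f)))
    (h2 : ∀ h ∈ B, L h = ∑ a, L (p a * h)) :
    ∀ a, ∀ f ∈ B, ∀ g ∈ B, 0 ≤ L (star (p a * f + g) * (p a * f + g)) := by
  intro a f hf g hg
  set q := p a with hqdef
  have hq : q * q = q := hidem a
  have cf : star f * q = q * star f := ((hcomm a _ (star_mem hf)).eq).symm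
  have cg : star g * q = q * star g := ((hcomm a _ (star_mem hg)).eq).symm
  have key : star (q * f + g) * (q * f + g)
      = q * (star (f + g) * (f + g)) + (star g * g - q * (star g * g)) := by
    have e1 : star (q * f + g) = star f * q + star g := by
      simp [star_mul, hsa a, hqdef]
    rw [e1]
    simp only [star_add, mul_add, add_mul]
    rw [cf]
    rw [show q * star f * (q * f) = q * (star f * q) * f by noncomm_ring,
        show star g * (q * f) = (star g * q) * f by noncomm_ring, cf, cg]
    rw [show q * (q * star f) * f = (q * q) * (star f * f) by noncomm_ring, hq]
    noncomm_ring
  have hmem : star g * g ∈ B := mul_mem (star_mem hg) hg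
  have hsum := h2 (star g * g) hmem
  rw [← Finset.add_sum_erase _ _ (Finset.mem_univ a)] at hsum
  have hLeq : L (star (q * f + g) * (q * f + g))
      = L (q * (star (f + g) * (f + g)))
        + ∑ b ∈ Finset.univ.erase a, L (p b * (star g * g)) := by
    rw [key, map_add, map_sub, hsum]
    ring
  rw [hLeq]
  exact add_nonneg (h1 a _ (add_mem hf hg))
    (Finset.sum_nonneg fun b _ => h1 b g hg)
end
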